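/- arXiv:2605.03658 — 8 statements merged into one kernel-verified Lean document; each statement's English description precedes it below -/
import Mathlib

section
/- Restriction of sheaves along the inclusion of the category Profinite of profinite sets into the category CompHaus of compact Hausdorff spaces induces an equivalence of categories between the category of condensed sets (sheaves of sets on CompHaus with the coherent topology) and the category of sheaves of sets on Profinite with the coherent topology. -/
/-!
STATEMENT 3: Restriction of sheaves along `Profinite ⥤ CompHaus` induces an equivalence between
condensed sets and sheaves of sets on `Profinite` with the coherent topology.
-/

universe u

open CategoryTheory

theorem profinite_restriction_equivalence :
    (profiniteToCompHaus.{u}.sheafPushforwardContinuous (Type (u+1))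
      (coherentTopology Profinite.{u}) (coherentTopology CompHaus.{u})).IsEquivalence := by
  infer_instance
end

section
/- A presheaf of sets F on the category Stonean of extremally disconnected compact Hausdorff spaces is a sheaf for the coherent topology if and only if F preserves finite products, i.e. F(∅) is a singleton and for all Stonean spaces S₁, S₂ the canonical map F(S₁ ⊔ S₂) → F(S₁) × F(S₂) is a bijection. -/
/-!
Stonean spaces are projective, so by Mathlib's comparison theorem a presheaf on `Stonean` is a
coherent sheaf exactly when it preserves finite products. A functor preserves finite products as
soon as it preserves the terminal object and binary products; in `Stoneanᵒᵖ` these are `op ∅` and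
`op (S₁ ⨿ S₂)`, and in types a terminal object is a singleton and a binary fan is a product exactly
when the pairing map to the cartesian product is bijective.
-/

universe u

open CategoryTheory Limits Opposite

namespace CategoryTheory.Limits

lemma Types.nonempty_isTerminal_iff (X : Type u) :
    Nonempty (IsTerminal X) ↔ Nonempty X ∧ Subsingleton X := by
  rw [(Types.isTerminalEquivUnique X).nonempty_congr, unique_iff_subsingleton_and_nonempty,
    and_comm]

lemma Types.nonempty_isLimit_binaryFan_iff_bijective {X Y : Type u} (c : BinaryFan X Y) :
    Nonempty (IsLimit c) ↔ Function.Bijective (fun x : c.pt => (c.fst x, c.snd x)) := by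
  rw [IsLimit.nonempty_isLimit_iff_isIso_lift (Types.binaryProductLimit X Y), isIso_iff_bijective]
  rfl

section

variable {C D : Type*} [Category C] [Category D] (G : C ⥤ D)

lemma preservesTerminal_iff_of_isTerminal {T : C} (hT : IsTerminal T) :
    PreservesLimit (Functor.empty.{0} C) G ↔ Nonempty (IsTerminal (G.obj T)) :=
  ⟨fun _ ↦ ⟨hT.isTerminalObj G⟩, fun ⟨h⟩ ↦
    preservesLimit_of_preserves_limit_cone hT ((isLimitMapConeEmptyConeEquiv G T).symm h)⟩

lemma preservesLimit_pair_iff_of_isLimit {P X Y : C} {f : P ⟶ X} {g : P ⟶ Y}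
    (l : IsLimit (BinaryFan.mk f g)) :
    PreservesLimit (pair X Y) G ↔ Nonempty (IsLimit (BinaryFan.mk (G.map f) (G.map g))) :=
  ⟨fun _ ↦ ⟨mapIsLimitOfPreservesOfIsLimit G f g l⟩, fun ⟨h⟩ ↦
    preservesLimit_of_preserves_limit_cone l ((isLimitMapConeBinaryFanEquiv G f g).symm h)⟩

lemma preservesFiniteProducts_iff_preservesTerminal_and_pair [HasFiniteProducts C] :
    PreservesFiniteProducts G ↔
      PreservesLimit (Functor.empty.{0} C) G ∧ ∀ X Y : C, PreservesLimit (pair X Y) G := by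
  refine ⟨fun _ ↦ ⟨inferInstance, fun _ _ ↦ inferInstance⟩, fun ⟨_, _⟩ ↦ ?_⟩
  have := preservesLimitsOfShape_pempty_of_preservesTerminal G
  have : PreservesLimitsOfShape (Discrete WalkingPair) G :=
    ⟨fun {K} ↦ preservesLimit_of_iso_diagram G (diagramIsoPair K).symm⟩
  exact .of_preserves_binary_and_terminal G

lemma preservesFiniteProducts_iff_initial_and_coprod [HasFiniteCoproducts C] (F : Cᵒᵖ ⥤ Type u) :
    PreservesFiniteProducts F ↔
      (Nonempty (F.obj (op (⊥_ C))) ∧ Subsingleton (F.obj (op (⊥_ C)))) ∧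
        ∀ X Y : C, Function.Bijective (fun x : F.obj (op (X ⨿ Y)) =>
          (F.map (coprod.inl : X ⟶ X ⨿ Y).op x, F.map (coprod.inr : Y ⟶ X ⨿ Y).op x)) := by
  rw [preservesFiniteProducts_iff_preservesTerminal_and_pair,
    preservesTerminal_iff_of_isTerminal F (terminalOpOfInitial initialIsInitial),
    Types.nonempty_isTerminal_iff, Opposite.op_surjective.forall₂]
  refine and_congr_right' (forall₂_congr fun X Y ↦ ?_)
  rw [preservesLimit_pair_iff_of_isLimit F (BinaryCofan.IsColimit.op (coprodIsCoprod X Y)),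
    Types.nonempty_isLimit_binaryFan_iff_bijective]
  rfl

end

end CategoryTheory.Limits

theorem isSheaf_coherent_stonean_iff_preservesFiniteProducts
    (F : Stonean.{u}ᵒᵖ ⥤ Type (u+1)) :
    Presheaf.IsSheaf (coherentTopology Stonean.{u}) F ↔
      ((Nonempty (F.obj (op (⊥_ Stonean.{u}))) ∧ Subsingleton (F.obj (op (⊥_ Stonean.{u})))) ∧
        ∀ S₁ S₂ : Stonean.{u},
          Function.Bijective (fun x : F.obj (op (S₁ ⨿ S₂)) =>
            (F.map (coprod.inl : S₁ ⟶ S₁ ⨿ S₂).op x,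
             F.map (coprod.inr : S₂ ⟶ S₁ ⨿ S₂).op x))) := by
  -- with its universe levels left to unification, instance search gets stuck on this instance
  have : HasFiniteCoproducts Stonean.{u} :=
    CompHausLike.instHasFiniteCoproductsOfHasExplicitFiniteCoproducts.{0, u}
  rw [Presheaf.isSheaf_iff_preservesFiniteProducts_of_projective,
    preservesFiniteProducts_iff_initial_and_coprod]
end

section
/- The functor from topological spaces to condensed sets sending a topological space X to the sheaf S ↦ C(S, X) of continuous maps on the site CompHaus is faithful, its restriction to the full subcategory of compactly generated topological spaces is fully faithful, and it admits a left adjoint sending a condensed set T to its underlying set T(*) equipped with the quotient topology induced by the maps S → T(*) coming from elements of T(S) for all compact Hausdorff spaces S. -/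
/-!
STATEMENT 7: The functor from topological spaces to condensed sets, `X ↦ (S ↦ C(S, X))`, is
faithful; its restriction to compactly generated spaces is fully faithful; and it admits a
left adjoint sending a condensed set `T` to its underlying set `T(*)` equipped with the
quotient topology induced by the maps from compact Hausdorff spaces `S → T(*)` coming from
elements of `T(S)`.
-/

universe u

open CategoryTheory

theorem topCatToCondensedSet_faithful_fullyFaithfulOnCG_hasLeftAdjoint :
    topCatToCondensedSet.{u}.Faithful ∧
    CondensedSet.compactlyGeneratedToCondensedSet.{u}.Full ∧
    CondensedSet.compactlyGeneratedToCondensedSet.{u}.Faithful ∧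
    Nonempty (condensedSetToTopCat.{u} ⊣ topCatToCondensedSet.{u}) := by
  exact ⟨inferInstance, CondensedSet.fullyFaithfulCompactlyGeneratedToCondensedSet.full, CondensedSet.fullyFaithfulCompactlyGeneratedToCondensedSet.faithful, ⟨CondensedSet.topCatAdjunction⟩⟩
end

section
/- (Nöbeling) For every profinite set S (compact Hausdorff totally disconnected space), the abelian group C(S, ℤ) of continuous maps from S to the discrete group ℤ — equivalently, the group of locally constant maps S → ℤ — is a free ℤ-module. -/
universe u

theorem nobeling (S : Type u) [TopologicalSpace S] [CompactSpace S] [T2Space S]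
    [TotallyDisconnectedSpace S] :
    Module.Free ℤ (LocallyConstant S ℤ) := by
  exact LocallyConstant.freeOfProfinite (Profinite.of S)
end

section
/- Let π : S' → S be a continuous surjection of profinite sets. For i ≥ 0 let T_i = {(x₀,…,x_i) ∈ (S')^{i+1} : π(x₀) = π(x₁) = ⋯ = π(x_i)} with the subspace topology (so T₀ = S'), let δ_k : T_{i+1} → T_i (0 ≤ k ≤ i+1) be the map deleting the k-th coordinate, and let d_i : LC(T_i, ℤ) → LC(T_{i+1}, ℤ) be the alternating sum ∑_{k=0}^{i+1} (−1)^k δ_k^* of pullbacks, where LC(T, ℤ) denotes the group of locally constant maps T → ℤ. Then the augmented Čech complex 0 → LC(S, ℤ) → LC(T₀, ℤ) → LC(T₁, ℤ) → ⋯ is exact: the pullback π^* : LC(S,ℤ) → LC(T₀,ℤ) is injective, its image equals the kernel of d₀, and for every i ≥ 0 the image of d_i equals the kernel of d_{i+1}. -/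
/-!
STATEMENT 10: For a continuous surjection `π : S' → S` of profinite sets, the augmented Čech
complex `0 → LC(S, ℤ) → LC(T₀, ℤ) → LC(T₁, ℤ) → ⋯` of locally constant `ℤ`-valued functions
is exact.
-/

universe u

variable {S' S : Type u} [TopologicalSpace S'] [TopologicalSpace S]

/-- The `i`-th term `T_i = {(x₀,…,x_i) ∈ (S')^{i+1} : π(x₀) = ⋯ = π(x_i)}` of the Čech
nerve of `π : S' → S`, topologized as a subspace of `(S')^{i+1}`. -/
def cechNerve (π : C(S', S)) (i : ℕ) : Type u :=
  {x : Fin (i + 1) → S' // ∀ k l, π (x k) = π (x l)}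

instance (π : C(S', S)) (i : ℕ) : TopologicalSpace (cechNerve π i) :=
  instTopologicalSpaceSubtype

/-- The map `δ_k : T_{i+1} → T_i` deleting the `k`-th coordinate. -/
def cechDelta (π : C(S', S)) {i : ℕ} (k : Fin (i + 2)) :
    C(cechNerve π (i + 1), cechNerve π i) where
  toFun x := ⟨fun j => x.1 (k.succAbove j), fun a b => x.2 _ _⟩
  continuous_toFun := by
    apply Continuous.subtype_mk
    exact continuous_pi fun j => (continuous_apply (k.succAbove j)).comp continuous_subtype_val

/-- The Čech differential `d_i = ∑ (−1)^k δ_k^* : LC(T_i, ℤ) → LC(T_{i+1}, ℤ)`. -/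
noncomputable def cechDifferential (π : C(S', S)) (i : ℕ) :
    LocallyConstant (cechNerve π i) ℤ → LocallyConstant (cechNerve π (i + 1)) ℤ :=
  fun f => ∑ k : Fin (i + 2), (-1 : ℤ) ^ (k : ℕ) • f.comap (cechDelta π k)

/-- The augmentation `T₀ → S`, `(x₀) ↦ π(x₀)`. -/
def cechAug (π : C(S', S)) : C(cechNerve π 0, S) where
  toFun x := π (x.1 0)
  continuous_toFun := π.continuous.comp ((continuous_apply 0).comp continuous_subtype_val)

/-!
Both `d ∘ d = 0` (by induction on the length of the tuples) and exactness come from the cone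
identity `δF (c, a) = F a - δ(F (c, ·)) a`: were `s` a continuous section of `π`,
`g (x₀, …, x_i) = f (s (π x₀), x₀, …, x_i)` would satisfy `d g = f` for every cocycle `f`.
There is no such section in general, but by compactness `f` only depends on the classes of the
coordinates in some discrete quotient `P` of `S'`, and there is a discrete quotient `R` of `S`
so fine that every tuple whose images are `R`-equal has the `P`-classes of a point of the Čech
nerve. A section of the surjection `S' → R` onto a finite set then serves as `s`. In degree `0`
a cocycle is constant on the fibres of the quotient map `π`, hence descends to `S`.
-/

section HomogeneousCoboundary

variable {A M : Type*} [AddCommGroup M]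

def homogeneousCoboundary {n : ℕ} (F : (Fin n → A) → M) (x : Fin (n + 1) → A) : M :=
  ∑ k : Fin (n + 1), (-1 : ℤ) ^ (k : ℕ) • F (x ∘ k.succAbove)

theorem homogeneousCoboundary_sub {n : ℕ} (F G : (Fin n → A) → M) :
    homogeneousCoboundary (F - G) = homogeneousCoboundary F - homogeneousCoboundary G := by
  ext x
  simp only [homogeneousCoboundary, Pi.sub_apply, smul_sub, Finset.sum_sub_distrib]

theorem homogeneousCoboundary_cons {n : ℕ} (F : (Fin (n + 1) → A) → M) (c : A)
    (a : Fin (n + 1) → A) :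
    homogeneousCoboundary F (Fin.cons c a) =
      F a - homogeneousCoboundary (fun b => F (Fin.cons c b)) a := by
  rw [homogeneousCoboundary, Fin.sum_univ_succ, Fin.val_zero, pow_zero, one_smul,
    Fin.succAbove_zero, Fin.cons_comp_succ, homogeneousCoboundary, sub_eq_add_neg,
    ← Finset.sum_neg_distrib]
  congr 1
  refine Finset.sum_congr rfl fun k _ => ?_
  rw [Fin.cons_comp_succ_succAbove, Fin.val_succ, pow_succ, mul_neg_one, neg_smul]
  rfl

theorem homogeneousCoboundary_homogeneousCoboundary {n : ℕ} (G : (Fin n → A) → M) :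
    homogeneousCoboundary (homogeneousCoboundary G) = 0 := by
  induction n with
  | zero =>
    ext x
    simp [homogeneousCoboundary, Fin.sum_univ_two, Subsingleton.elim (_ : Fin 0 → A) Fin.elim0]
  | succ n ih =>
    ext x
    rw [← Fin.cons_self_tail x, homogeneousCoboundary_cons]
    have hcone : (fun b => homogeneousCoboundary G (Fin.cons (x 0) b)) =
        G - homogeneousCoboundary (fun b => G (Fin.cons (x 0) b)) :=
      funext fun b => homogeneousCoboundary_cons G (x 0) b
    rw [hcone, homogeneousCoboundary_sub, ih]
    simp

end HomogeneousCoboundary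

theorem IsCompact.exists_discreteQuotient_proj_ne {X Y ι : Type*} [TopologicalSpace X]
    [TopologicalSpace Y] [CompactSpace Y] [T2Space Y] [TotallyDisconnectedSpace Y]
    {C : Set X} (hC : IsCompact C) {u v : ι → X → Y} (hu : ∀ k, Continuous (u k))
    (hv : ∀ k, Continuous (v k)) (h : ∀ x ∈ C, ∃ k, u k x ≠ v k x) :
    ∃ R : DiscreteQuotient Y, ∀ x ∈ C, ∃ k, R.proj (u k x) ≠ R.proj (v k x) := by
  let t : DiscreteQuotient Y → Set X := fun R => ⋂ k, {x | R.proj (u k x) = R.proj (v k x)}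
  have ht_closed : ∀ R, IsClosed (t R) := fun R => isClosed_iInter fun k =>
    isClosed_eq (R.proj_continuous.comp (hu k)) (R.proj_continuous.comp (hv k))
  have ht_mono : ∀ {R R' : DiscreteQuotient Y}, R ≤ R' → t R ⊆ t R' := fun hle x hx =>
    Set.mem_iInter.mpr fun k => by
      simpa only [Set.mem_ofPred_eq, DiscreteQuotient.ofLE_proj] using
        congrArg (DiscreteQuotient.ofLE hle) (Set.mem_iInter.mp hx k)
  have ht_directed : Directed (· ⊇ ·) t := fun R₁ R₂ =>
    ⟨R₁ ⊓ R₂, ht_mono inf_le_left, ht_mono inf_le_right⟩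
  have hC_inter : C ∩ ⋂ R, t R = ∅ := by
    refine Set.eq_empty_of_forall_notMem fun x ⟨hxC, hx⟩ => ?_
    obtain ⟨k, hk⟩ := h x hxC
    exact hk (DiscreteQuotient.eq_of_forall_proj_eq fun R =>
      Set.mem_iInter.mp (Set.mem_iInter.mp hx R) k)
  obtain ⟨R, hR⟩ := hC.elim_directed_family_closed t ht_closed hC_inter ht_directed
  refine ⟨R, fun x hx => ?_⟩
  by_contra! hne
  exact (Set.eq_empty_iff_forall_notMem.mp hR) x ⟨hx, Set.mem_iInter.mpr hne⟩

section CechComplex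

variable (π : C(S', S))

namespace cechNerve

instance [CompactSpace S'] [T2Space S] (i : ℕ) : CompactSpace (cechNerve π i) := by
  have hclosed : IsClosed {x : Fin (i + 1) → S' | ∀ k l, π (x k) = π (x l)} := by
    simp only [Set.ofPred_forall]
    exact isClosed_iInter fun k => isClosed_iInter fun l =>
      isClosed_eq (π.continuous.comp (continuous_apply k)) (π.continuous.comp (continuous_apply l))
  exact isCompact_iff_compactSpace.mp hclosed.isCompact

theorem exists_discreteQuotient_factorsThrough [CompactSpace S'] [T2Space S']
    [TotallyDisconnectedSpace S'] [T2Space S] {i : ℕ} {Z : Type*}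
    (f : LocallyConstant (cechNerve π i) Z) :
    ∃ P : DiscreteQuotient S', Function.FactorsThrough f fun x => P.proj ∘ x.1 := by
  have hC : IsClosed {p : cechNerve π i × cechNerve π i | f p.1 ≠ f p.2} :=
    ((f.isLocallyConstant.comp_continuous continuous_fst).prodMk
      (f.isLocallyConstant.comp_continuous continuous_snd) {q | q.1 = q.2}).isClosed_compl
  obtain ⟨P, hP⟩ := hC.isCompact.exists_discreteQuotient_proj_ne
    (u := fun k p => p.1.1 k) (v := fun k p => p.2.1 k)
    (fun k => (continuous_apply k).comp (continuous_subtype_val.comp continuous_fst))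
    (fun k => (continuous_apply k).comp (continuous_subtype_val.comp continuous_snd))
    fun p hp => by
      by_contra! h
      exact hp (congrArg f (Subtype.ext (funext h)))
  refine ⟨P, fun x y hxy => ?_⟩
  by_contra hne
  obtain ⟨k, hk⟩ := hP (x, y) hne
  exact hk (congrFun hxy k)

theorem exists_discreteQuotient_lift [CompactSpace S'] [CompactSpace S] [T2Space S]
    [TotallyDisconnectedSpace S] (i : ℕ) (P : DiscreteQuotient S') :
    ∃ R : DiscreteQuotient S, ∀ y : Fin (i + 1) → S',
      (∀ k l, R.proj (π (y k)) = R.proj (π (y l))) →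
      ∃ x : cechNerve π i, P.proj ∘ x.1 = P.proj ∘ y := by
  have hC : IsClosed {y : Fin (i + 1) → S' | ¬ ∃ x : cechNerve π i, P.proj ∘ x.1 = P.proj ∘ y} :=
    (isClosed_discrete {c : Fin (i + 1) → P | ¬ ∃ x : cechNerve π i, P.proj ∘ x.1 = c}).preimage
      (continuous_pi fun k => P.proj_continuous.comp (continuous_apply k))
  obtain ⟨R, hR⟩ := hC.isCompact.exists_discreteQuotient_proj_ne
    (u := fun (kl : Fin (i + 1) × Fin (i + 1)) y => π (y kl.1)) (v := fun kl y => π (y kl.2))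
    (fun _ => π.continuous.comp (continuous_apply _))
    (fun _ => π.continuous.comp (continuous_apply _))
    fun y hy => by
      by_contra! h
      exact hy ⟨⟨y, fun k l => h (k, l)⟩, rfl⟩
  refine ⟨R, fun y hy => ?_⟩
  by_contra hlift
  obtain ⟨⟨k, l⟩, hkl⟩ := hR y hlift
  exact hkl (hy k l)

def diagonal (i : ℕ) : C(S', cechNerve π i) where
  toFun a := ⟨fun _ => a, fun _ _ => rfl⟩
  continuous_toFun := (continuous_pi fun _ => continuous_id).subtype_mk _

theorem diagonal_zero_apply_zero (x : cechNerve π 0) : diagonal π 0 (x.1 0) = x :=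
  Subtype.ext (funext fun k => by rw [Fin.fin_one_eq_zero k]; rfl)

end cechNerve

open cechNerve

theorem cechAug_surjective (hπ : Function.Surjective π) : Function.Surjective (cechAug π) :=
  fun s => let ⟨a, ha⟩ := hπ s; ⟨diagonal π 0 a, ha⟩

theorem cechDifferential_apply {i : ℕ} (f : LocallyConstant (cechNerve π i) ℤ)
    (x : cechNerve π (i + 1)) :
    cechDifferential π i f x = ∑ k : Fin (i + 2), (-1 : ℤ) ^ (k : ℕ) • f (cechDelta π k x) := by
  rw [cechDifferential, ← LocallyConstant.coeFnAddMonoidHom_apply, map_sum, Finset.sum_apply]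
  rfl

theorem cechDifferential_apply_eq_homogeneousCoboundary {A : Type*} (φ : S' → A) {i : ℕ}
    {f : LocallyConstant (cechNerve π i) ℤ} {F : (Fin (i + 1) → A) → ℤ}
    (hf : ∀ x, f x = F (φ ∘ x.1)) (x : cechNerve π (i + 1)) :
    cechDifferential π i f x = homogeneousCoboundary F (φ ∘ x.1) := by
  rw [cechDifferential_apply]
  exact Finset.sum_congr rfl fun k _ => by rw [hf]; rfl

theorem cechDifferential_cechDifferential {i : ℕ} (g : LocallyConstant (cechNerve π i) ℤ) :
    cechDifferential π (i + 1) (cechDifferential π i g) = 0 := by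
  have hval : Function.Injective fun y : cechNerve π i => y.1 := fun _ _ => Subtype.ext
  have hg : ∀ x, g x = Function.extend (fun y : cechNerve π i => y.1) g 0 (id ∘ x.1) :=
    fun x => (hval.extend_apply g 0 x).symm
  ext x
  rw [cechDifferential_apply_eq_homogeneousCoboundary π id
      (cechDifferential_apply_eq_homogeneousCoboundary π id hg),
    homogeneousCoboundary_homogeneousCoboundary]
  rfl

theorem cechDifferential_zero_apply (f : LocallyConstant (cechNerve π 0) ℤ) (x : cechNerve π 1) :
    cechDifferential π 0 f x = f (cechDelta π 0 x) - f (cechDelta π 1 x) := by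
  simp [cechDifferential_apply, Fin.sum_univ_two, sub_eq_add_neg]

theorem cechDifferential_zero_comap_cechAug (g : LocallyConstant S ℤ) :
    cechDifferential π 0 (g.comap (cechAug π)) = 0 := by
  ext x
  rw [cechDifferential_zero_apply, LocallyConstant.coe_zero, Pi.zero_apply, sub_eq_zero]
  exact congrArg g (x.2 _ _)

theorem exists_comap_cechAug_eq [CompactSpace S'] [T2Space S] (hπ : Function.Surjective π)
    (f : LocallyConstant (cechNerve π 0) ℤ) (hf : cechDifferential π 0 f = 0) :
    ∃ g : LocallyConstant S ℤ, g.comap (cechAug π) = f := by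
  let f' : LocallyConstant S' ℤ := f.comap (diagonal π 0)
  have hf' : Function.FactorsThrough f' π := fun a b hab => by
    let z : cechNerve π 1 := ⟨![a, b], by simp [Fin.forall_fin_two, hab]⟩
    have hz : f (cechDelta π 0 z) - f (cechDelta π 1 z) = 0 := by
      rw [← cechDifferential_zero_apply, hf]
      rfl
    rwa [sub_eq_zero, ← diagonal_zero_apply_zero π (cechDelta π 0 z),
      ← diagonal_zero_apply_zero π (cechDelta π 1 z), eq_comm] at hz
  have hq : Topology.IsQuotientMap π := π.continuous.isClosedMap.isQuotientMap π.continuous hπ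
  let g : C(S, ℤ) := hq.lift f' hf'
  refine ⟨⟨g, (IsLocallyConstant.iff_continuous g).mpr g.continuous⟩,
    LocallyConstant.ext fun x => ?_⟩
  calc g (π (x.1 0)) = f' (x.1 0) :=
        ContinuousMap.congr_fun (hq.lift_comp (f' : C(S', ℤ)) hf') (x.1 0)
    _ = f x := congrArg f (diagonal_zero_apply_zero π x)

theorem exists_cechDifferential_eq_of_homogeneousCoboundary_eq_zero
    (hπ : Function.Surjective π) (P : DiscreteQuotient S') (R : DiscreteQuotient S) {i : ℕ}
    (F : (Fin (i + 2) → P) → ℤ)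
    (hF : ∀ y : Fin (i + 3) → S', (∀ k l, R.proj (π (y k)) = R.proj (π (y l))) →
      homogeneousCoboundary F (P.proj ∘ y) = 0) :
    ∃ g : LocallyConstant (cechNerve π i) ℤ, ∀ x, cechDifferential π i g x = F (P.proj ∘ x.1) := by
  obtain ⟨σ, hσ⟩ : ∃ σ : R → S', ∀ r, R.proj (π (σ r)) = r :=
    ⟨_, Function.rightInverse_surjInv (R.proj_surjective.comp hπ)⟩
  let c : S' → P := fun a => P.proj (σ (R.proj (π a)))
  have hc : IsLocallyConstant fun x : cechNerve π i => c (x.1 0) :=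
    (R.proj_isLocallyConstant.comp_continuous
      (π.continuous.comp ((continuous_apply 0).comp continuous_subtype_val))).comp
      fun r => P.proj (σ r)
  have hPx : IsLocallyConstant fun x : cechNerve π i => P.proj ∘ x.1 :=
    (IsLocallyConstant.iff_continuous _).mpr <| continuous_pi fun k =>
      P.proj_continuous.comp ((continuous_apply k).comp continuous_subtype_val)
  refine ⟨⟨fun x => F (Fin.cons (c (x.1 0)) (P.proj ∘ x.1)),
    hc.comp₂ hPx fun p b => F (Fin.cons p b)⟩, fun x => ?_⟩
  have hcx : ∀ k, c (x.1 k) = c (x.1 0) := fun k => by simp only [c, x.2 k 0]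
  let y : Fin (i + 3) → S' := Fin.cons (σ (R.proj (π (x.1 0)))) x.1
  have hy : ∀ k, R.proj (π (y k)) = R.proj (π (x.1 0)) :=
    Fin.cases (hσ _) fun k => congrArg R.proj (x.2 k 0)
  calc _ = homogeneousCoboundary (fun b => F (Fin.cons (c (x.1 0)) b)) (P.proj ∘ x.1) := by
        rw [cechDifferential_apply]
        refine Finset.sum_congr rfl fun k _ => ?_
        rw [← hcx (k.succAbove 0)]
        rfl
    _ = F (P.proj ∘ x.1) - homogeneousCoboundary F (P.proj ∘ y) := by
        rw [Fin.comp_cons, homogeneousCoboundary_cons, sub_sub_cancel]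
    _ = F (P.proj ∘ x.1) := by rw [hF y fun k l => (hy k).trans (hy l).symm, sub_zero]

theorem exists_cechDifferential_eq [CompactSpace S'] [T2Space S'] [TotallyDisconnectedSpace S']
    [CompactSpace S] [T2Space S] [TotallyDisconnectedSpace S] (hπ : Function.Surjective π)
    {i : ℕ} (f : LocallyConstant (cechNerve π (i + 1)) ℤ)
    (hf : cechDifferential π (i + 1) f = 0) :
    ∃ g : LocallyConstant (cechNerve π i) ℤ, cechDifferential π i g = f := by
  obtain ⟨P, hP⟩ := exists_discreteQuotient_factorsThrough π f
  let F : (Fin (i + 2) → P) → ℤ :=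
    Function.extend (fun x : cechNerve π (i + 1) => P.proj ∘ x.1) f 0
  have hfF : ∀ x, f x = F (P.proj ∘ x.1) := fun x => (hP.extend_apply 0 x).symm
  obtain ⟨R, hR⟩ := exists_discreteQuotient_lift π (i + 2) P
  obtain ⟨g, hg⟩ := exists_cechDifferential_eq_of_homogeneousCoboundary_eq_zero π hπ P R F
    fun y hy => by
      obtain ⟨x, hx⟩ := hR y hy
      rw [← hx, ← cechDifferential_apply_eq_homogeneousCoboundary π P.proj hfF, hf]
      rfl
  exact ⟨g, LocallyConstant.ext fun x => (hg x).trans (hfF x).symm⟩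

end CechComplex

theorem cech_complex_locallyConstant_exact
    [CompactSpace S'] [T2Space S'] [TotallyDisconnectedSpace S']
    [CompactSpace S] [T2Space S] [TotallyDisconnectedSpace S]
    (π : C(S', S)) (hπ : Function.Surjective π) :
    Function.Injective (fun g : LocallyConstant S ℤ => g.comap (cechAug π)) ∧
    Set.range (fun g : LocallyConstant S ℤ => g.comap (cechAug π)) =
      {f | cechDifferential π 0 f = 0} ∧
    ∀ i : ℕ, Set.range (cechDifferential π i) = {f | cechDifferential π (i + 1) f = 0} := by
  refine ⟨LocallyConstant.comap_injective _ (cechAug_surjective π hπ), ?_, fun i => ?_⟩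
  · ext f
    exact ⟨by rintro ⟨g, rfl⟩; exact cechDifferential_zero_comap_cechAug π g,
      exists_comap_cechAug_eq π hπ f⟩
  · ext f
    exact ⟨by rintro ⟨g, rfl⟩; exact cechDifferential_cechDifferential π g,
      exists_cechDifferential_eq π hπ f⟩
end

section
/- Let F = (F_i, d_i) be a chain complex of functors from abelian groups to abelian groups, each F_i naturally isomorphic to A ↦ ⊕_{j=1}^{n_i} ℤ[A^{r_{i,j}}] for natural numbers n_i, r_{i,j}, equipped with a natural transformation ε : F₀ → Id such that for every abelian group A the augmented complex ⋯ → F₁(A) → F₀(A) → A → 0 is exact. Then for every integer n, the two endomorphisms of the chain complex F given by (a) multiplication by n on each term F_i(A), and (b) the chain map F([n]) induced via functoriality by the multiplication-by-n endomorphism of A, are chain homotopic via a homotopy h_i : F_i → F_{i+1} consisting of natural transformations (i.e. the homotopy is functorial in A). -/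
/-!
STATEMENT 16: For a functorial Breen–Deligne-type resolution `F` of abelian groups, and any
integer `n`, the chain endomorphisms of `F` given by multiplication by `n` on each term and by
functoriality from the multiplication-by-`n` map of `A` are chain homotopic via a functorial
homotopy.
-/

universe u

open CategoryTheory Limits

/-- The functor `X ↦ X^r` on types. -/
def powFunctor (r : ℕ) : Type u ⥤ Type u where
  obj X := Fin r → X
  map f := TypeCat.ofHom (fun g => f ∘ g)

/-- The functor `A ↦ ℤ[A^r]` from abelian groups to abelian groups. -/
noncomputable def freePow (r : ℕ) : AddCommGrpCat.{u} ⥤ AddCommGrpCat.{u} :=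
  forget AddCommGrpCat ⋙ powFunctor r ⋙ AddCommGrpCat.free

noncomputable instance : HasFiniteBiproducts (AddCommGrpCat.{u} ⥤ AddCommGrpCat.{u}) :=
  HasFiniteBiproducts.of_hasFiniteProducts

/-- The natural endomorphism of a functor `G : Ab ⥤ Ab` induced via functoriality by the
multiplication-by-`n` endomorphism of each abelian group `A`. -/
def mapZsmul (n : ℤ) (G : AddCommGrpCat.{u} ⥤ AddCommGrpCat.{u}) : G ⟶ G where
  app A := G.map (n • 𝟙 A)
  naturality A B f := by
    rw [← G.map_comp, ← G.map_comp]
    congr 1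
    simp

/-! `freePow r = ℤ[(-)^r]` is the free abelian group on the functor `Hom(ℤ^r, -)`, so by Yoneda a
natural transformation `freePow r ⟶ G` amounts to an element of `G(ℤ^r)`. Consequently a natural
map out of a term of `F` lifts along `τ : G ⟶ H` as soon as it lands pointwise in the image of `τ`,
and pointwise exactness suffices to run the inductive construction of the comparison theorem with
natural maps. The difference of the two chain maps vanishes after `ε`, since `ε` is natural and
`[m]` acts on the identity functor as multiplication by `m`; hence it is null-homotopic. -/

namespace freePow

variable {r : ℕ} {G H : AddCommGrpCat.{u} ⥤ AddCommGrpCat.{u}}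

noncomputable def of {A : AddCommGrpCat.{u}} (x : Fin r → A) : (freePow r).obj A :=
  FreeAbelianGroup.of x

lemma map_of {A B : AddCommGrpCat.{u}} (f : A ⟶ B) (x : Fin r → A) :
    (freePow r).map f (of x) = of (f ∘ x) :=
  FreeAbelianGroup.map_of_apply x

lemma obj_hom_ext {A B : AddCommGrpCat.{u}} {f g : (freePow r).obj A ⟶ B}
    (h : ∀ x : Fin r → A, f (of x) = g (of x)) : f = g :=
  AddCommGrpCat.hom_ext (FreeAbelianGroup.lift_ext _ _ h)

abbrev universalGroup (r : ℕ) : AddCommGrpCat.{u} :=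
  AddCommGrpCat.of (FreeAbelianGroup (ULift (Fin r)))

noncomputable def universalElt (r : ℕ) : (freePow.{u} r).obj (universalGroup r) :=
  of fun j => (FreeAbelianGroup.of ⟨j⟩ : universalGroup r)

noncomputable def basisLift {A : AddCommGrpCat.{u}} (x : Fin r → A) : universalGroup r ⟶ A :=
  AddCommGrpCat.ofHom (FreeAbelianGroup.lift (x ∘ ULift.down))

lemma basisLift_comp {A B : AddCommGrpCat.{u}} (x : Fin r → A) (f : A ⟶ B) :
    basisLift x ≫ f = basisLift (f ∘ x) :=
  AddCommGrpCat.hom_ext (FreeAbelianGroup.lift_ext _ _ fun _ => by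
    simp [basisLift, AddCommGrpCat.hom_comp])

lemma basisLift_of (r : ℕ) :
    basisLift (fun j => (FreeAbelianGroup.of ⟨j⟩ : universalGroup.{u} r)) = 𝟙 _ :=
  AddCommGrpCat.hom_ext (FreeAbelianGroup.lift_ext _ _ fun _ => by simp [basisLift])

lemma map_basisLift_universalElt {A : AddCommGrpCat.{u}} (x : Fin r → A) :
    (freePow r).map (basisLift x) (universalElt r) = of x := by
  rw [universalElt, map_of]
  congr 1
  funext j
  simp [basisLift]

lemma app_of (α : freePow.{u} r ⟶ G) {A : AddCommGrpCat.{u}} (x : Fin r → A) :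
    α.app A (of x) = G.map (basisLift x) (α.app _ (universalElt r)) := by
  rw [← map_basisLift_universalElt x]
  exact ConcreteCategory.congr_hom (α.naturality (basisLift x)) (universalElt r)

lemma hom_ext {α β : freePow.{u} r ⟶ G}
    (h : α.app _ (universalElt r) = β.app _ (universalElt r)) : α = β := by
  ext A : 2
  exact obj_hom_ext fun x => by rw [app_of, app_of, h]

noncomputable def descApp (g : G.obj (universalGroup r)) (A : AddCommGrpCat.{u}) :
    (freePow r).obj A ⟶ G.obj A :=
  AddCommGrpCat.ofHom (FreeAbelianGroup.lift fun x : Fin r → A => G.map (basisLift x) g)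

lemma descApp_of (g : G.obj (universalGroup r)) {A : AddCommGrpCat.{u}} (x : Fin r → A) :
    descApp g A (of x) = G.map (basisLift x) g :=
  FreeAbelianGroup.lift_apply_of _ _

noncomputable def desc (g : G.obj (universalGroup r)) : freePow.{u} r ⟶ G where
  app := descApp g
  naturality A B f := obj_hom_ext fun x => by
    rw [ConcreteCategory.comp_apply, ConcreteCategory.comp_apply, map_of, descApp_of,
      descApp_of, ← ConcreteCategory.comp_apply, ← G.map_comp, basisLift_comp]

lemma desc_app_universalElt (g : G.obj (universalGroup r)) :
    (desc g).app _ (universalElt r) = g := by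
  rw [desc, universalElt, descApp_of, basisLift_of, G.map_id]
  rfl

lemma exists_lift (τ : G ⟶ H) (α : freePow.{u} r ⟶ H)
    (hα : α.app _ (universalElt r) ∈ Set.range (τ.app _)) : ∃ β, β ≫ τ = α := by
  obtain ⟨g, hg⟩ := hα
  exact ⟨desc g, hom_ext (by simp [desc_app_universalElt, hg])⟩

end freePow

section Lifting

variable {G H K P : AddCommGrpCat.{u} ⥤ AddCommGrpCat.{u}} {k : ℕ} {r : Fin k → ℕ}

lemma exists_lift_of_iso_biproduct (e : P ≅ ⨁ fun j => freePow.{u} (r j)) (τ : G ⟶ H)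
    (α : P ⟶ H) (hα : ∀ A x, α.app A x ∈ Set.range (τ.app A)) : ∃ β, β ≫ τ = α := by
  choose β hβ using fun j =>
    freePow.exists_lift τ (biproduct.ι (fun j => freePow.{u} (r j)) j ≫ e.inv ≫ α) (hα _ _)
  refine ⟨e.hom ≫ biproduct.desc β, ?_⟩
  have hdesc : biproduct.desc β ≫ τ = e.inv ≫ α :=
    biproduct.hom_ext' _ _ fun j => by rw [biproduct.ι_desc_assoc, hβ]
  rw [Category.assoc, hdesc, Iso.hom_inv_id_assoc]

lemma exists_lift_of_iso_biproduct_of_exact (e : P ≅ ⨁ fun j => freePow.{u} (r j))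
    (τ : G ⟶ H) (σ : H ⟶ K) (hexact : ∀ A, Set.range (τ.app A) = {x | σ.app A x = 0})
    (α : P ⟶ H) (hα : α ≫ σ = 0) : ∃ β, β ≫ τ = α :=
  exists_lift_of_iso_biproduct e τ α fun A x => by
    rw [hexact, Set.mem_ofPred_eq, ← ConcreteCategory.comp_apply, ← NatTrans.comp_app, hα]
    rfl

end Lifting

lemma ChainComplex.nonempty_homotopy_zero_of_exists_lift {C : Type*} [Category C] [Preadditive C]
    {P Q : ChainComplex C ℕ} {E : C} (ε : Q.X 0 ⟶ E) (e : P ⟶ Q) (he : e.f 0 ≫ ε = 0)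
    (lift₀ : ∀ g : P.X 0 ⟶ Q.X 0, g ≫ ε = 0 → ∃ h : P.X 0 ⟶ Q.X 1, h ≫ Q.d 1 0 = g)
    (lift : ∀ i (g : P.X (i + 1) ⟶ Q.X (i + 1)), g ≫ Q.d (i + 1) i = 0 →
      ∃ h : P.X (i + 1) ⟶ Q.X (i + 2), h ≫ Q.d (i + 2) (i + 1) = g) :
    Nonempty (Homotopy e 0) := by
  choose l hl using lift
  obtain ⟨h₀, hh₀⟩ := lift₀ _ he
  have hl₁ := hl 0 (e.f 1 - P.d 1 0 ≫ h₀) (by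
    rw [Preadditive.sub_comp, e.comm, Category.assoc, hh₀, sub_self])
  refine ⟨Homotopy.mkInductive e h₀ hh₀.symm _ (by rw [hl₁]; abel) fun i ⟨f, f', hf⟩ => ?_⟩
  have hli := hl (i + 1) (e.f (i + 2) - P.d (i + 2) (i + 1) ≫ f') (by
    rw [Preadditive.sub_comp, e.comm, hf, Preadditive.comp_add, ← Category.assoc,
      ← Category.assoc, P.d_comp_d, zero_comp, zero_add, Category.assoc, sub_self])
  exact ⟨_, by rw [hli]; abel⟩

lemma mapZsmul_naturality (m : ℤ) {G H : AddCommGrpCat.{u} ⥤ AddCommGrpCat.{u}} (τ : G ⟶ H) :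
    mapZsmul m G ≫ τ = τ ≫ mapZsmul m H := by
  ext A : 2
  exact τ.naturality (m • 𝟙 A)

lemma mapZsmul_id (m : ℤ) : mapZsmul m (𝟭 AddCommGrpCat.{u}) = m • 𝟙 _ := by
  ext A : 2
  simp [mapZsmul]

def HomologicalComplex.mapZsmul {ι : Type*} {c : ComplexShape ι} (m : ℤ)
    (F : HomologicalComplex (AddCommGrpCat.{u} ⥤ AddCommGrpCat.{u}) c) : F ⟶ F where
  f i := _root_.mapZsmul m (F.X i)
  comm' i j _ := mapZsmul_naturality m (F.d i j)

theorem breen_deligne_mul_homotopy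
    (n : ℕ → ℕ) (r : ∀ i, Fin (n i) → ℕ)
    (F : ChainComplex (AddCommGrpCat.{u} ⥤ AddCommGrpCat.{u}) ℕ)
    (iso : ∀ i, F.X i ≅ ⨁ fun j => freePow.{u} (r i j))
    (ε : F.X 0 ⟶ 𝟭 AddCommGrpCat.{u})
    (hexact : ∀ A : AddCommGrpCat.{u},
      Function.Surjective (ε.app A) ∧
      Set.range ((F.d 1 0).app A) = {x | (ε.app A) x = 0} ∧
      ∀ i : ℕ, Set.range ((F.d (i + 2) (i + 1)).app A) =
        {x | ((F.d (i + 1) i).app A) x = 0})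
    (m : ℤ) :
    ∃ (φ ψ : F ⟶ F),
      (∀ i, φ.f i = m • 𝟙 (F.X i)) ∧
      (∀ i, ψ.f i = mapZsmul m (F.X i)) ∧
      Nonempty (Homotopy φ ψ) := by
  refine ⟨m • 𝟙 F, HomologicalComplex.mapZsmul m F, fun i => rfl, fun i => rfl, ?_⟩
  have hε : (m • 𝟙 F - HomologicalComplex.mapZsmul m F).f 0 ≫ ε = 0 := by
    simp [HomologicalComplex.mapZsmul, mapZsmul_naturality, mapZsmul_id]
  obtain ⟨h⟩ := ChainComplex.nonempty_homotopy_zero_of_exists_lift ε _ hε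
    (fun g => exists_lift_of_iso_biproduct_of_exact (iso 0) _ ε (fun A => (hexact A).2.1) g)
    (fun i g => exists_lift_of_iso_biproduct_of_exact (iso (i + 1)) _ _
      (fun A => (hexact A).2.2 i) g)
  exact ⟨Homotopy.equivSubZero.symm h⟩
end

section
/- Let A be a commutative ring and A⁺ ⊆ A a subring that is integrally closed in A. Then for every f ∈ A, one has f ∈ A⁺ if and only if for every linearly ordered commutative group with zero Γ₀ and every valuation v : A → Γ₀ satisfying v(a) ≤ 1 for all a ∈ A⁺, one has v(f) ≤ 1. -/
/-!
STATEMENT 17: Let `A` be a commutative ring and `A⁺ ⊆ A` a subring integrally closed in `A`.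
Then `f ∈ A⁺` if and only if every valuation `v` on `A` with `v ≤ 1` on `A⁺` satisfies
`v f ≤ 1`.
-/

set_option maxHeartbeats 1000000
set_option synthInstance.maxHeartbeats 1000000

universe u

theorem mem_integrallyClosedSubring_iff_forall_valuation_le_one
    {A : Type u} [CommRing A] (Aplus : Subring A)
    (hint : ∀ x : A, IsIntegral Aplus x → x ∈ Aplus) (f : A) :
    f ∈ Aplus ↔
      ∀ (Γ₀ : Type u) (_ : LinearOrderedCommGroupWithZero Γ₀) (v : Valuation A Γ₀),
        (∀ a ∈ Aplus, v a ≤ 1) → v f ≤ 1 := by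
  constructor
  · exact fun hf Γ₀ _ v hv => hv f hf
  intro H
  by_contra hf
  have hA : Nontrivial A := by
    by_contra h
    rw [not_nontrivial_iff_subsingleton] at h
    exact hf (by rw [Subsingleton.elim f 0]; exact zero_mem _)
  have hfi : ¬ IsIntegral Aplus f := fun h => hf (hint f h)
  set Af := Localization.Away f with hAf
  set φ : A →+* Af := algebraMap A Af with hφ
  letI : Algebra ↥Aplus Af := (φ.comp (algebraMap ↥Aplus A)).toAlgebra
  set g : Af := IsLocalization.Away.invSelf f with hg
  have hfg : φ f * g = 1 := IsLocalization.Away.mul_invSelf f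
  set B := Algebra.adjoin ↥Aplus ({g} : Set Af) with hB
  have hgB : g ∈ B := Algebra.self_mem_adjoin_singleton _ _
  -- Step 1: the ideal generated by g in B is proper
  have hspan : (Ideal.span {(⟨g, hgB⟩ : B)}) ≠ ⊤ := by
    intro htop
    apply hfi
    have h1 : (1 : B) ∈ Ideal.span {(⟨g, hgB⟩ : B)} := by rw [htop]; exact Submodule.mem_top
    obtain ⟨c, hc⟩ := Ideal.mem_span_singleton'.mp h1
    have hc1 : (c : Af) * g = 1 := by simpa using congrArg Subtype.val hc
    have hcB : (c : Af) ∈ (Polynomial.aeval (R := ↥Aplus) g).range := by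
      rw [← Algebra.adjoin_singleton_eq_range_aeval]; exact c.2
    obtain ⟨p, hp0⟩ := hcB
    have hp : (Polynomial.aeval (R := ↥Aplus) g) p = (c : Af) := hp0
    set q : Polynomial ↥Aplus := p * Polynomial.X - 1 with hq
    have hqeval : Polynomial.eval₂ (algebraMap ↥Aplus Af) g q = 0 := by
      rw [hq, ← Polynomial.aeval_def]
      rw [map_sub, map_mul, Polynomial.aeval_X, map_one, hp, hc1, sub_self]
    letI : Invertible g := ⟨φ f, hfg, by rw [mul_comm]; exact hfg⟩
    have hrev : Polynomial.eval₂ (algebraMap ↥Aplus Af) (φ f) q.reverse = 0 := by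
      have := (Polynomial.eval₂_reverse_eq_zero_iff (algebraMap ↥Aplus Af) g q).mpr hqeval
      exact this
    have hq0 : q.coeff 0 = -1 := by
      rw [hq]; simp [Polynomial.coeff_mul_X_zero]
    have htc : q.trailingCoeff = -1 := by
      have h0 : q.natTrailingDegree = 0 :=
        Polynomial.natTrailingDegree_eq_zero.mpr (Or.inr (by rw [hq0]; simp))
      rw [Polynomial.trailingCoeff, h0, hq0]
    have hPmonic : (-q.reverse).Monic := by
      rw [Polynomial.Monic, Polynomial.leadingCoeff_neg, Polynomial.reverse_leadingCoeff, htc,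
        neg_neg]
    have hPeval : Polynomial.eval₂ (algebraMap ↥Aplus Af) (φ f) (-q.reverse) = 0 := by
      rw [Polynomial.eval₂_neg, hrev, neg_zero]
    have h0 : φ (Polynomial.eval₂ (algebraMap ↥Aplus A) f (-q.reverse)) = 0 := by
      rw [Polynomial.hom_eval₂]; exact hPeval
    obtain ⟨⟨u, n, rfl⟩, hn⟩ :=
      (IsLocalization.map_eq_zero_iff (Submonoid.powers f) Af _).mp h0
    refine ⟨Polynomial.X ^ n * (-q.reverse), (Polynomial.monic_X_pow n).mul hPmonic, ?_⟩
    rw [Polynomial.eval₂_mul, Polynomial.eval₂_X_pow]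
    exact hn
  -- Step 2: a maximal ideal m of B containing g
  obtain ⟨m, hmmax, hm_ge⟩ := Ideal.exists_le_maximal _ hspan
  haveI : m.IsPrime := hmmax.isPrime
  have hgm : (⟨g, hgB⟩ : B) ∈ m := hm_ge (Ideal.subset_span rfl)
  -- Step 3: a prime p of Af disjoint from B \ m
  set S : Submonoid Af := m.primeCompl.map (B.toSubring.subtype) with hS
  haveI hLnt : Nontrivial (Localization S) := by
    rcases subsingleton_or_nontrivial (Localization S) with h | h
    · exfalso
      have h1 : algebraMap Af (Localization S) 1 = 0 := Subsingleton.elim _ _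
      obtain ⟨⟨s, hs⟩, hs0⟩ := (IsLocalization.map_eq_zero_iff S _ _).mp h1
      obtain ⟨b, hb, rfl⟩ := hs
      apply hb
      have hb0 : b = 0 := Subtype.ext (by simpa using hs0)
      rw [hb0]; exact m.zero_mem
    · exact h
  obtain ⟨M, hM⟩ := Ideal.exists_maximal (Localization S)
  haveI := hM.isPrime
  set p : Ideal Af := M.comap (algebraMap Af (Localization S)) with hp'
  haveI : p.IsPrime := Ideal.IsPrime.comap _
  have hdisj : ∀ b : B, b ∉ m → (b : Af) ∉ p := by
    intro b hb hbp
    have hu : IsUnit (algebraMap Af (Localization S) b) :=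
      IsLocalization.map_units (M := S) (Localization S)
        ⟨(b : Af), Submonoid.mem_map.mpr ⟨b, hb, rfl⟩⟩
    exact hM.ne_top (M.eq_top_of_isUnit_mem hbp hu)
  -- Step 4: the fraction field of Af/p
  set K := FractionRing (Af ⧸ p) with hK
  set ψ : Af →+* K := (algebraMap (Af ⧸ p) K).comp (Ideal.Quotient.mk p) with hψ
  have hker : ∀ x : Af, ψ x = 0 ↔ x ∈ p := by
    intro x
    rw [hψ, RingHom.comp_apply,
      map_eq_zero_iff _ (IsFractionRing.injective (Af ⧸ p) K)]
    exact Ideal.Quotient.eq_zero_iff_mem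
  -- image of B in K, with its prime
  set B'' : Subring K := B.toSubring.map ψ with hB''
  set π : ↥B.toSubring →+* ↥B'' :=
    (ψ.comp B.toSubring.subtype).codRestrict B'' (fun b => ⟨b.1, b.2, rfl⟩) with hπ
  have hπsurj : Function.Surjective π := by
    rintro ⟨x, b, hb, rfl⟩
    exact ⟨⟨b, hb⟩, rfl⟩
  have hπker : RingHom.ker π ≤ m := by
    intro b hb
    by_contra hbm
    have : ψ (b : Af) = 0 := congrArg Subtype.val hb
    exact hdisj b hbm ((hker _).mp this)
  set q' : Ideal ↥B'' := m.map π with hq'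
  haveI : q'.IsPrime := Ideal.map_isPrime_of_surjective hπsurj hπker
  -- Step 5: valuation subring dominating the localization of B'' at q'
  obtain ⟨V, hle, hlocal⟩ := (LocalSubring.ofPrime B'' q').exists_le_valuationSubring
  have hBD : B'' ≤ (LocalSubring.ofPrime B'' q').toSubring := LocalSubring.le_ofPrime B'' q'
  -- valuation on A
  have hv1 : ∀ a ∈ Aplus, (V.valuation.comap (ψ.comp φ)) a ≤ 1 := by
    intro a ha
    have hmem : φ a ∈ B.toSubring := B.algebraMap_mem ⟨a, ha⟩
    have : ψ (φ a) ∈ V.toSubring := hle (hBD ⟨φ a, hmem, rfl⟩)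
    exact (V.valuation_le_one_iff _).mpr this
  have hgB'' : ψ g ∈ B'' := ⟨g, hgB, rfl⟩
  have hgq : (⟨ψ g, hgB''⟩ : B'') ∈ q' := Ideal.mem_map_of_mem π hgm
  have hnd :
      ¬ IsUnit (algebraMap ↥B'' ↥(LocalSubring.ofPrime B'' q').toSubring ⟨ψ g, hgB''⟩) := by
    rw [IsLocalization.AtPrime.isUnit_to_map_iff
      (↥(LocalSubring.ofPrime B'' q').toSubring) q']
    exact fun h => h hgq
  set d : ↥(LocalSubring.ofPrime B'' q').toSubring :=
    algebraMap ↥B'' ↥(LocalSubring.ofPrime B'' q').toSubring ⟨ψ g, hgB''⟩ with hd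
  have hndV : ¬ IsUnit (Subring.inclusion hle d) := fun h => hnd (hlocal.1 d h)
  have hgV : V.valuation (ψ g) < 1 := by
    have hmemV : ψ g ∈ V.toSubring := hle (hBD hgB'')
    have heq : Subring.inclusion hle d = (⟨ψ g, hmemV⟩ : V.toSubring) := rfl
    have := (V.valuation_lt_one_iff ⟨ψ g, hmemV⟩).mp (by
      rw [IsLocalRing.mem_maximalIdeal]
      rw [heq] at hndV
      exact hndV)
    exact this
  have hfle : V.valuation (ψ (φ f)) ≤ 1 := H (V.ValueGroup) inferInstance
    (V.valuation.comap (ψ.comp φ)) hv1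
  have hone : V.valuation (ψ (φ f)) * V.valuation (ψ g) = 1 := by
    rw [← map_mul, ← map_mul, hfg, map_one, map_one]
  have : (1 : V.ValueGroup) < 1 := by
    calc (1 : V.ValueGroup) = V.valuation (ψ (φ f)) * V.valuation (ψ g) := hone.symm
      _ ≤ 1 * V.valuation (ψ g) := mul_le_mul_left hfle _
      _ = V.valuation (ψ g) := one_mul _
      _ < 1 := hgV
  exact lt_irrefl _ this
end

section
/- Let A be a commutative ring and A⁺ ⊆ A a subring integrally closed in A. For elements t₁, …, t_m, f of A, say that a valuation v on A with v(a) ≤ 1 for all a ∈ A⁺ lies in U(t₁,…,t_m/f) if v(t_k) ≤ v(f) for all k and v(f) ≠ 0. Suppose given finitely many families (g_{1,i}, …, g_{m_i,i}, f_i) in A for i = 1, …, n such that every valuation v on A (with values in any linearly ordered commutative group with zero) satisfying v(A⁺) ≤ 1 lies in U_i := U(g_{1,i},…,g_{m_i,i}, f_i / f_i) for some i. Then there exist finitely many elements s₁, …, s_N ∈ A generating the unit ideal of A such that for every j ∈ {1,…,N} there is some i ∈ {1,…,n} with the property that every valuation v on A with v(A⁺) ≤ 1 lying in U(s₁,…,s_N/s_j)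 lies in U_i. -/
/-!
Replacing `v` by Huber's restriction `v|_{cΓ_v}`, which kills the values below the convex subgroup
generated by the values `≥ 1`, shows that every `v` satisfies, for some `i` and some `c ∈ A`, the
conditions `v (g i k * c) ≤ v (f i * c)` and `1 ≤ v (f i * c)`. Each such condition is clopen in
the compact space of valuative relations `A → A → Bool`, so finitely many pairs `(i, c)` suffice.
For these take Huber's products `s = (f q * c_q) * ∏_{p ≠ q} t_p`, each `t_p` being `1` or some
`g p k * c_p`. At a pair containing `v` a numerator may be traded for the denominator without
decreasing `v`, so a product maximising `v` among the `s` maximises it among all products, which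
forces `v` into the rational set of its denominator. The `1`s put every `f q * c_q` into the
family, and these generate the unit ideal since no trivial valuation kills them all.
-/

universe u

namespace Valuation

variable {A : Type*} [CommRing A] {Γ₀ : Type*} [LinearOrderedCommGroupWithZero Γ₀]
  (v : Valuation A Γ₀)

/-- Huber's characteristic subgroup `cΓ_v`: the convex subgroup of `Γ₀` generated by the values
`≥ 1` of `v`. -/
def charSubgroup : Set Γ₀ := {γ | ∃ c, 1 ≤ v c ∧ (v c)⁻¹ ≤ γ ∧ γ ≤ v c}

namespace charSubgroup

variable {v} {γ δ : Γ₀}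

lemma one_mem : (1 : Γ₀) ∈ v.charSubgroup := ⟨1, by simp⟩

lemma ne_zero (hγ : γ ∈ v.charSubgroup) : γ ≠ 0 := by
  obtain ⟨c, hc, hcγ, -⟩ := hγ
  exact ne_zero_of_lt ((inv_pos.2 (zero_lt_one.trans_le hc)).trans_le hcγ)

lemma mul_mem (hγ : γ ∈ v.charSubgroup) (hδ : δ ∈ v.charSubgroup) :
    γ * δ ∈ v.charSubgroup := by
  obtain ⟨c, hc, hcγ, hγc⟩ := hγ
  obtain ⟨e, he, heδ, hδe⟩ := hδ
  refine ⟨c * e, ?_, ?_, ?_⟩ <;> simp only [map_mul, mul_inv]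
  · exact one_le_mul hc he
  · exact mul_le_mul' hcγ heδ
  · exact mul_le_mul' hγc hδe

lemma inv_mem (hγ : γ ∈ v.charSubgroup) : γ⁻¹ ∈ v.charSubgroup := by
  have hγ₀ := ne_zero hγ
  obtain ⟨c, hc, hcγ, hγc⟩ := hγ
  refine ⟨c, hc, inv_anti₀ (zero_lt_iff.2 hγ₀) hγc, ?_⟩
  simpa using inv_anti₀ (inv_pos.2 (zero_lt_one.trans_le hc)) hcγ

lemma mul_mem_iff (hγ : γ ∈ v.charSubgroup) : γ * δ ∈ v.charSubgroup ↔ δ ∈ v.charSubgroup := by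
  refine ⟨fun h => ?_, mul_mem hγ⟩
  simpa [← mul_assoc, inv_mul_cancel₀ (ne_zero hγ)] using mul_mem (inv_mem hγ) h

lemma apply_mem_of_one_le {a : A} (ha : 1 ≤ v a) : v a ∈ v.charSubgroup :=
  ⟨a, ha, (inv_le_one_of_one_le₀ ha).trans ha, le_rfl⟩

lemma apply_lt_of_notMem {a : A} (ha : v a ∉ v.charSubgroup) (hγ : γ ∈ v.charSubgroup) :
    v a < γ := by
  obtain ⟨c, hc, hcγ, -⟩ := hγ
  by_contra! h
  rcases le_total (v a) (v c) with hac | hca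
  · exact ha ⟨c, hc, hcγ.trans h, hac⟩
  · exact ha (apply_mem_of_one_le (hc.trans hca))

end charSubgroup

/-- Huber's restriction `v|_{cΓ_v}`. -/
noncomputable def restrictChar : Valuation A Γ₀ where
  toFun a := by classical exact if v a ∈ v.charSubgroup then v a else 0
  map_zero' := by simp
  map_one' := by simp [charSubgroup.one_mem]
  map_mul' x y := by
    simp only [map_mul]
    by_cases hx : v x ∈ v.charSubgroup
    · by_cases hy : v y ∈ v.charSubgroup <;> simp [hx, hy, charSubgroup.mul_mem_iff hx]
    · by_cases hy : v y ∈ v.charSubgroup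
      · simp [hx, hy, mul_comm (v x), charSubgroup.mul_mem_iff hy]
      · have hxy : v x * v y ∉ v.charSubgroup := fun h =>
          have hy₁ : v y ≤ 1 := (charSubgroup.apply_lt_of_notMem hy charSubgroup.one_mem).le
          (charSubgroup.apply_lt_of_notMem hx h).not_ge (mul_le_of_le_one_right' hy₁)
        simp [hx, hy, hxy]
  map_add_le_max' x y := by
    by_cases hxy : v (x + y) ∈ v.charSubgroup
    · have key : ∀ z, v (x + y) ≤ v z → v z ∈ v.charSubgroup ∧ v (x + y) ≤ v z := fun z h =>
        ⟨by_contra fun hz => (charSubgroup.apply_lt_of_notMem hz hxy).not_ge h, h⟩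
      rcases le_max_iff.1 (v.map_add x y) with h | h
      · simp [hxy, key x h]
      · simp [hxy, key y h]
    · simp [hxy]

variable {v}

lemma restrictChar_apply_of_mem {a : A} (ha : v a ∈ v.charSubgroup) : v.restrictChar a = v a :=
  if_pos ha

lemma restrictChar_apply_of_notMem {a : A} (ha : v a ∉ v.charSubgroup) : v.restrictChar a = 0 :=
  if_neg ha

lemma restrictChar_apply_le (a : A) : v.restrictChar a ≤ v a := by
  by_cases ha : v a ∈ v.charSubgroup
  · rw [restrictChar_apply_of_mem ha]
  · rw [restrictChar_apply_of_notMem ha]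
    exact zero_le

theorem exists_one_le_mul_of_restrictChar {ι : Type*} (g : ι → A) (f : A)
    (hg : ∀ k, v.restrictChar (g k) ≤ v.restrictChar f) (hf : v.restrictChar f ≠ 0) :
    ∃ c, 1 ≤ v (f * c) ∧ ∀ k, v (g k * c) ≤ v (f * c) := by
  have hfS : v f ∈ v.charSubgroup := by_contra fun h => hf (restrictChar_apply_of_notMem h)
  obtain ⟨c, hc, hcf, -⟩ := id hfS
  refine ⟨c, ?_, fun k => ?_⟩
  · rw [map_mul]
    simpa [inv_mul_cancel₀ (zero_lt_one.trans_le hc).ne'] using mul_le_mul_left hcf (v c)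
  · rw [map_mul, map_mul]
    gcongr
    by_cases hk : v (g k) ∈ v.charSubgroup
    · simpa [restrictChar_apply_of_mem hk, restrictChar_apply_of_mem hfS] using hg k
    · exact (charSubgroup.apply_lt_of_notMem hk hfS).le

theorem forall_le_of_forall_mul_le {ι : Type*} (g : ι → A) (f c : A)
    (hg : ∀ k, v (g k * c) ≤ v (f * c)) (hf : v (f * c) ≠ 0) : (∀ k, v (g k) ≤ v f) ∧ v f ≠ 0 := by
  rw [map_mul] at hf
  refine ⟨fun k => le_of_mul_le_mul_right ?_ (zero_lt_iff.2 (right_ne_zero_of_mul hf)),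
    left_ne_zero_of_mul hf⟩
  simpa only [map_mul] using hg k

end Valuation

section Compactness

variable {A : Type u} [CommRing A]

variable (A) in
/-- The `ValuativeRel` structures on `A` (whose axiom `vle_mul_comm` is automatic in a commutative
ring), as points of the compact space `A → A → Bool`. -/
def valuativeBoolRels : Set (A → A → Bool) :=
  {R | (∀ x y, R x y ∨ R y x) ∧ (∀ x y z, R x y → R y z → R x z) ∧
    (∀ x y z, R x z → R y z → R (x + y) z) ∧ (∀ x y z, R x y → R (x * z) (y * z)) ∧
    (∀ x y z, ¬ R z 0 → R (x * z) (y * z) → R x y) ∧ ¬ R 1 0}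

lemma isClosed_valuativeBoolRels : IsClosed (valuativeBoolRels A) := by
  have closed₂ (x y x' y' : A) (s : Set (Bool × Bool)) :
      IsClosed {R : A → A → Bool | (R x y, R x' y') ∈ s} :=
    (isClosed_discrete s).preimage (by fun_prop)
  have closed₃ (x y x' y' x'' y'' : A) (s : Set (Bool × Bool × Bool)) :
      IsClosed {R : A → A → Bool | (R x y, R x' y', R x'' y'') ∈ s} :=
    (isClosed_discrete s).preimage (by fun_prop)
  simp only [valuativeBoolRels, Set.ofPred_and, Set.ofPred_forall]
  refine .inter ?_ (.inter ?_ (.inter ?_ (.inter ?_ (.inter ?_ ?_))))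
  · exact isClosed_iInter fun x => isClosed_iInter fun y =>
      closed₂ x y y x {b | b.1 ∨ b.2}
  · exact isClosed_iInter fun x => isClosed_iInter fun y => isClosed_iInter fun z =>
      closed₃ x y y z x z {b | b.1 → b.2.1 → b.2.2}
  · exact isClosed_iInter fun x => isClosed_iInter fun y => isClosed_iInter fun z =>
      closed₃ x z y z (x + y) z {b | b.1 → b.2.1 → b.2.2}
  · exact isClosed_iInter fun x => isClosed_iInter fun y => isClosed_iInter fun z =>
      closed₂ x y (x * z) (y * z) {b | b.1 → b.2}
  · exact isClosed_iInter fun x => isClosed_iInter fun y => isClosed_iInter fun z =>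
      closed₃ z 0 (x * z) (y * z) x y {b | ¬ b.1 → b.2.1 → b.2.2}
  · exact closed₂ 1 0 1 0 {b | ¬ b.1}

abbrev ValuativeRel.ofMemValuativeBoolRels {R : A → A → Bool} (hR : R ∈ valuativeBoolRels A) :
    ValuativeRel A where
  vle x y := R x y
  vle_total := hR.1
  vle_trans h h' := hR.2.1 _ _ _ h h'
  vle_add := hR.2.2.1 _ _ _
  mul_vle_mul_left h z := hR.2.2.2.1 _ _ z h
  vle_mul_cancel := hR.2.2.2.2.1 _ _ _
  not_vle_one_zero := hR.2.2.2.2.2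
  vle_mul_comm {x y} := by rw [mul_comm]; exact (hR.1 _ _).elim id id

lemma Valuation.decide_le_mem_valuativeBoolRels {Γ₀ : Type*} [LinearOrderedCommGroupWithZero Γ₀]
    (v : Valuation A Γ₀) : (fun x y => decide (v x ≤ v y)) ∈ valuativeBoolRels A := by
  simp only [valuativeBoolRels, decide_eq_true_eq, Set.mem_ofPred_eq, map_mul, map_zero, map_one,
    not_le]
  refine ⟨fun _ _ => le_total _ _, fun _ _ _ => le_trans,
    fun x y _ hx hy => (v.map_add x y).trans (max_le hx hy), fun _ _ _ h => by gcongr,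
    fun _ _ _ hz h => le_of_mul_le_mul_right h hz, zero_lt_one⟩

theorem Valuation.exists_finset_subcover (T : Set A) {P : Type*} {N : P → Type*}
    [∀ p, Finite (N p)] (t : ∀ p, N p → A) (d : P → A)
    (h : ∀ (Γ₀ : Type u) [LinearOrderedCommGroupWithZero Γ₀] (v : Valuation A Γ₀),
      (∀ a ∈ T, v a ≤ 1) → ∃ p, ∀ k, v (t p k) ≤ v (d p)) :
    ∃ C : Finset P, ∀ (Γ₀ : Type*) [LinearOrderedCommGroupWithZero Γ₀] (v : Valuation A Γ₀),
      (∀ a ∈ T, v a ≤ 1) → ∃ p ∈ C, ∀ k, v (t p k) ≤ v (d p) := by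
  let K := valuativeBoolRels A ∩ {R | ∀ a ∈ T, R a 1}
  let W (p : P) : Set (A → A → Bool) := ⋂ k, {R | R (t p k) (d p)}
  have hK : IsCompact K := by
    refine (isClosed_valuativeBoolRels.inter ?_).isCompact
    simp only [Set.ofPred_forall]
    exact isClosed_iInter fun a => isClosed_iInter fun _ =>
      (isClosed_discrete {true}).preimage (f := fun R : A → A → Bool => R a 1) (by fun_prop)
  have hW (p : P) : IsOpen (W p) :=
    isOpen_iInter_of_finite fun k => (isOpen_discrete {true}).preimage (by fun_prop)
  have hKW : K ⊆ ⋃ p, W p := by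
    rintro R ⟨hR, hRT⟩
    let := ValuativeRel.ofMemValuativeBoolRels hR
    have hle (x y : A) : R x y ↔ ValuativeRel.valuation A x ≤ ValuativeRel.valuation A y :=
      (ValuativeRel.valuation A).vle_iff_le
    obtain ⟨p, hp⟩ := h _ (ValuativeRel.valuation A) fun a ha => by
      simpa using (hle a 1).1 (hRT a ha)
    exact Set.mem_iUnion.2 ⟨p, Set.mem_iInter.2 fun k => (hle _ _).2 (hp k)⟩
  obtain ⟨C, hC⟩ := hK.elim_finite_subcover W hW hKW
  refine ⟨C, fun Γ₀ _ v hv => ?_⟩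
  have hvK : (fun x y => decide (v x ≤ v y)) ∈ K :=
    ⟨v.decide_le_mem_valuativeBoolRels, fun a ha => by simpa using hv a ha⟩
  obtain ⟨p, hpC, hp⟩ := Set.mem_iUnion₂.1 (hC hvK)
  exact ⟨p, hpC, fun k => by simpa [W] using Set.mem_iInter.1 hp k⟩

end Compactness

section StandardFamily

open Finset Function

variable {A : Type*} [CommRing A] {P : Type*} [Fintype P] [DecidableEq P] {N : P → Type*}
  (t : ∀ p, N p → A) (d : P → A)

/-- The products `d q * ∏_{p ≠ q} t p (φ p)` of Huber's standard refinement: one factor from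
every member of the covering, the denominator from the `q`-th one. -/
def standardFamily (x : P × ∀ p, N p) : A :=
  ∏ p, update (fun p => t p (x.2 p)) x.1 (d x.1) p

lemma prod_update_eq_mul (φ : ∀ p, N p) (q : P) (a : A) :
    ∏ p, update (fun p => t p (φ p)) q a p = a * ∏ p ∈ univ \ {q}, t p (φ p) :=
  prod_update_of_mem (mem_univ q) _ _

lemma span_standardFamily_eq_top (hone : ∀ p, ∃ k, t p k = 1)
    (hd : Ideal.span (Set.range d) = ⊤) : Ideal.span (Set.range (standardFamily t d)) = ⊤ := by
  choose φ hφ using hone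
  refine eq_top_iff.2 (hd ▸ Ideal.span_mono ?_)
  rintro _ ⟨q, rfl⟩
  exact ⟨(q, φ), by simp [standardFamily, prod_update_eq_mul, hφ]⟩

variable {t d} {Γ₀ : Type*} [LinearOrderedCommGroupWithZero Γ₀] {v : Valuation A Γ₀} {p₀ : P}

lemma apply_prod_le_standardFamily (hp₀ : ∀ k, v (t p₀ k) ≤ v (d p₀)) (φ : ∀ p, N p) :
    v (∏ p, t p (φ p)) ≤ v (standardFamily t d (p₀, φ)) := by
  have hφ : ∏ p, t p (φ p) = ∏ p, update (fun p => t p (φ p)) p₀ (t p₀ (φ p₀)) p := by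
    rw [update_eq_self]
  rw [hφ, standardFamily, prod_update_eq_mul, prod_update_eq_mul, map_mul, map_mul]
  gcongr
  exact hp₀ _

theorem forall_apply_le_of_forall_le_standardFamily (hp₀ : ∀ k, v (t p₀ k) ≤ v (d p₀))
    {x : P × ∀ p, N p} (hmax : ∀ y, v (standardFamily t d y) ≤ v (standardFamily t d x))
    (hx : v (standardFamily t d x) ≠ 0) :
    (∀ k, v (t x.1 k) ≤ v (d x.1)) ∧ v (d x.1) ≠ 0 := by
  obtain ⟨q, φ⟩ := x
  set r := ∏ p ∈ univ \ {q}, t p (φ p)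
  rw [standardFamily, prod_update_eq_mul, map_mul] at hmax hx
  refine ⟨fun k => ?_, left_ne_zero_of_mul hx⟩
  have hk : v (t q k) * v r ≤ v (d q) * v r := by
    have := (apply_prod_le_standardFamily hp₀ (update φ q k)).trans (hmax (p₀, update φ q k))
    simpa only [apply_update (f := t), prod_update_eq_mul, map_mul] using this
  exact le_of_mul_le_mul_right hk (zero_lt_iff.2 (right_ne_zero_of_mul hx))

end StandardFamily

lemma Ideal.span_range_eq_top_of_forall_valuation {A : Type u} [CommRing A] {P : Type*}
    (d : P → A)
    (h : ∀ (Γ₀ : Type u) [LinearOrderedCommGroupWithZero Γ₀] (v : Valuation A Γ₀),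
      (∀ a, v a ≤ 1) → ∃ p, v (d p) ≠ 0) :
    Ideal.span (Set.range d) = ⊤ := by
  classical
  by_contra hne
  obtain ⟨M, hM, hdM⟩ := Ideal.exists_le_maximal _ hne
  let v : Valuation A (WithZero (Multiplicative PUnit.{u + 1})) :=
    (1 : Valuation (A ⧸ M) _).comap (Ideal.Quotient.mk M)
  obtain ⟨p, hp⟩ := h _ v fun a => Valuation.one_apply_le_one (Ideal.Quotient.mk M a)
  exact hp (Valuation.one_apply_eq_zero_iff.2
    (Ideal.Quotient.eq_zero_iff_mem.2 (hdM (Ideal.subset_span ⟨p, rfl⟩))) : v (d p) = 0)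

theorem exists_standard_rational_refinement_general
    {A : Type u} [CommRing A] (Aplus : Subring A)
    (n : ℕ) (m : Fin n → ℕ) (g : ∀ i : Fin n, Fin (m i) → A) (f : Fin n → A)
    (hcover : ∀ (Γ₀ : Type u) (_ : LinearOrderedCommGroupWithZero Γ₀) (v : Valuation A Γ₀),
      (∀ a ∈ Aplus, v a ≤ 1) →
      ∃ i : Fin n, (∀ k, v (g i k) ≤ v (f i)) ∧ v (f i) ≠ 0) :
    ∃ (N : ℕ) (s : Fin N → A),
      Ideal.span (Set.range s) = ⊤ ∧
      ∀ j : Fin N, ∃ i : Fin n,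
        ∀ (Γ₀ : Type u) (_ : LinearOrderedCommGroupWithZero Γ₀) (v : Valuation A Γ₀),
          (∀ a ∈ Aplus, v a ≤ 1) →
          ((∀ j' : Fin N, v (s j') ≤ v (s j)) ∧ v (s j) ≠ 0) →
          ((∀ k, v (g i k) ≤ v (f i)) ∧ v (f i) ≠ 0) := by
  classical
  -- the pair `(i, c)` stands for the condition `v (g i k * c) ≤ v (f i * c)` and `1 ≤ v (f i * c)`
  let t (p : Fin n × A) (o : Option (Fin (m p.1))) : A := o.elim 1 (g p.1 · * p.2)
  let d (p : Fin n × A) : A := f p.1 * p.2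
  have hpt : ∀ (Γ₀ : Type u) [LinearOrderedCommGroupWithZero Γ₀] (v : Valuation A Γ₀),
      (∀ a ∈ Aplus, v a ≤ 1) → ∃ p, ∀ o, v (t p o) ≤ v (d p) := by
    intro Γ₀ _ v hv
    obtain ⟨i, hg, hf⟩ :=
      hcover Γ₀ inferInstance v.restrictChar fun a ha => (v.restrictChar_apply_le a).trans (hv a ha)
    obtain ⟨c, hc, hgc⟩ := v.exists_one_le_mul_of_restrictChar (g i) (f i) hg hf
    exact ⟨(i, c), Option.forall.2 ⟨by simpa [t, d] using hc, hgc⟩⟩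
  obtain ⟨C, hC⟩ := Valuation.exists_finset_subcover (Aplus : Set A) t d hpt
  let F := standardFamily (P := C) (fun p => t p) (fun p => d p)
  have hd : Ideal.span (Set.range fun p : C => d p) = ⊤ := by
    refine Ideal.span_range_eq_top_of_forall_valuation _ fun Γ₀ _ v hv => ?_
    obtain ⟨p, hpC, hp⟩ := hC Γ₀ v fun a _ => hv a
    exact ⟨⟨p, hpC⟩, (zero_lt_one.trans_le (by simpa [t] using hp none)).ne'⟩
  let e := Fintype.equivFin (C × ∀ p : C, Option (Fin (m p.1.1)))
  refine ⟨_, F ∘ e.symm, ?_, fun j => ⟨(e.symm j).1.1.1, fun Γ₀ _ v hv hcell => ?_⟩⟩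
  · rw [e.symm.surjective.range_comp]
    exact span_standardFamily_eq_top _ _ (fun p => ⟨none, rfl⟩) hd
  obtain ⟨p₀, hp₀C, hp₀⟩ := hC Γ₀ v hv
  have hmax (y) : v (F y) ≤ v (F (e.symm j)) := by simpa using hcell.1 (e y)
  obtain ⟨hdom, hd₀⟩ := forall_apply_le_of_forall_le_standardFamily (p₀ := (⟨p₀, hp₀C⟩ : C)) hp₀
    hmax hcell.2
  exact v.forall_le_of_forall_mul_le _ _ _ (fun k => hdom (some k)) hd₀

theorem exists_standard_rational_refinement
    {A : Type u} [CommRing A] (Aplus : Subring A)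
    (hint : ∀ x : A, IsIntegral Aplus x → x ∈ Aplus)
    (n : ℕ) (m : Fin n → ℕ) (g : ∀ i : Fin n, Fin (m i) → A) (f : Fin n → A)
    (hcover : ∀ (Γ₀ : Type u) (_ : LinearOrderedCommGroupWithZero Γ₀) (v : Valuation A Γ₀),
      (∀ a ∈ Aplus, v a ≤ 1) →
      ∃ i : Fin n, (∀ k, v (g i k) ≤ v (f i)) ∧ v (f i) ≠ 0) :
    ∃ (N : ℕ) (s : Fin N → A),
      Ideal.span (Set.range s) = ⊤ ∧
      ∀ j : Fin N, ∃ i : Fin n,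
        ∀ (Γ₀ : Type u) (_ : LinearOrderedCommGroupWithZero Γ₀) (v : Valuation A Γ₀),
          (∀ a ∈ Aplus, v a ≤ 1) →
          ((∀ j' : Fin N, v (s j') ≤ v (s j)) ∧ v (s j) ≠ 0) →
          ((∀ k, v (g i k) ≤ v (f i)) ∧ v (f i) ≠ 0) :=
  exists_standard_rational_refinement_general Aplus n m g f hcover
end
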